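/- arXiv:1109.2225 — 5 statements merged into one kernel-verified Lean document; each statement's English description precedes it below -/
import Mathlib

section
/- Let G be a group admitting no surjective group homomorphism onto ℤ, and let φ, ψ be automorphisms of G. Then the mapping tori G_φ and G_ψ are isomorphic as groups if and only if there exist an automorphism α of G and an element g ∈ G such that either α ∘ φ = c_g ∘ ψ ∘ α or α ∘ φ = c_g ∘ ψ⁻¹ ∘ α (i.e. the image of φ in Out(G) is conjugate to the image of ψ or of ψ⁻¹). -/
/-- The mapping torus `G ⋊_φ ℤ` of an automorphism `φ` of `G`: the semidirect product
in which `n : ℤ` acts on `G` by `φ ^ n`. -/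
abbrev MappingTorus (G : Type*) [Group G] (φ : MulAut G) : Type _ :=
  SemidirectProduct G (Multiplicative ℤ) (zpowersHom (MulAut G) φ)

/-!
Since `G` has no epimorphism onto `ℤ`, every homomorphism `G → ℤ` is trivial (its image would
be a nontrivial, hence infinite cyclic, subgroup of `ℤ`). So an isomorphism `e : G_φ ≅ G_ψ`
maps the fibre `G = ker (G_φ → ℤ)` onto `G = ker (G_ψ → ℤ)`, restricting to some `α ∈ Aut(G)`,
and induces an automorphism of `ℤ`, so it sends the stable letter `t` to `g t^{±1}`. Applying
`e` to `t x t⁻¹ = φ x` gives `α ∘ φ = c_g ∘ ψ^{±1} ∘ α`. Conversely, conjugating `φ` by `α`,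
composing it with an inner automorphism, or inverting it does not change the isomorphism
type of the mapping torus.
-/

open SemidirectProduct Multiplicative

theorem MonoidHom.eq_one_of_forall_not_surjective {G : Type*} [Group G]
    (hG : ∀ f : G →* Multiplicative ℤ, ¬ Function.Surjective f) (f : G →* Multiplicative ℤ) :
    f = 1 := by
  by_contra hf
  obtain ⟨x, hfx⟩ := DFunLike.ne_iff.mp hf
  have : Infinite f.range :=
    Set.infinite_coe_iff.mpr <| (infinite_zpowers.mpr
      (not_isOfFinOrder_of_isMulTorsionFree (a := f x) hfx)).mono
      (Subgroup.zpowers_le.mpr ⟨x, rfl⟩)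
  exact hG ((intCyclicMulEquiv (G := f.range)).symm.toMonoidHom.comp f.rangeRestrict)
    ((intCyclicMulEquiv (G := f.range)).symm.surjective.comp f.rangeRestrict_surjective)

namespace SemidirectProduct

section

variable {N G H : Type*} [Group N] [Group G] [Group H] {φ : G →* MulAut N}

theorem mul_inl_mul_inv (p : N ⋊[φ] G) (n : N) :
    p * inl n * p⁻¹ = inl (p.left * φ p.right n * p.left⁻¹) := by
  ext <;> simp [mul_left, inv_left]

def toLeft (k : H →* N ⋊[φ] G) (hk : rightHom.comp k = 1) : H →* N where
  toFun x := (k x).left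
  map_one' := by simp
  map_mul' x y := by simp [mul_left, show (k x).right = 1 from DFunLike.congr_fun hk x]

theorem inl_toLeft (k : H →* N ⋊[φ] G) (hk : rightHom.comp k = 1) (x : H) :
    inl (toLeft k hk x) = k x := by
  rw [← inl_left_mul_inr_right (k x), show (k x).right = 1 from DFunLike.congr_fun hk x,
    map_one, mul_one]
  rfl

end

section

variable {N₁ G₁ N₂ G₂ : Type*} [Group N₁] [Group G₁] [Group N₂] [Group G₂]
  {φ₁ : G₁ →* MulAut N₁} {φ₂ : G₂ →* MulAut N₂}

def leftMulEquiv (e : N₁ ⋊[φ₁] G₁ ≃* N₂ ⋊[φ₂] G₂)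
    (h₁ : rightHom.comp (e.toMonoidHom.comp inl) = 1)
    (h₂ : rightHom.comp (e.symm.toMonoidHom.comp inl) = 1) : N₁ ≃* N₂ :=
  MonoidHom.toMulEquiv (toLeft _ h₁) (toLeft _ h₂)
    (MonoidHom.ext fun x => inl_injective (by
      rw [MonoidHom.comp_apply, inl_toLeft, MonoidHom.comp_apply, inl_toLeft]; simp))
    (MonoidHom.ext fun x => inl_injective (by
      rw [MonoidHom.comp_apply, inl_toLeft, MonoidHom.comp_apply, inl_toLeft]; simp))

theorem inl_leftMulEquiv (e : N₁ ⋊[φ₁] G₁ ≃* N₂ ⋊[φ₂] G₂)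
    (h₁ : rightHom.comp (e.toMonoidHom.comp inl) = 1)
    (h₂ : rightHom.comp (e.symm.toMonoidHom.comp inl) = 1) (n : N₁) :
    inl (leftMulEquiv e h₁ h₂ n) = e (inl n) :=
  inl_toLeft (e.toMonoidHom.comp inl) h₁ n

end

theorem isUnit_toAdd_apply_inr_ofAdd_one {N : Type*} [Group N]
    {χ : Multiplicative ℤ →* MulAut N} (f : N ⋊[χ] Multiplicative ℤ →* Multiplicative ℤ)
    (hf : Function.Surjective f) (hinl : f.comp inl = 1) :
    IsUnit (toAdd (f (inr (ofAdd 1)))) := by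
  obtain ⟨p, hp⟩ := hf (ofAdd 1)
  have hfp : f p = f (inr (ofAdd 1)) ^ toAdd p.right := by
    nth_rw 1 [← inl_left_mul_inr_right p]
    rw [map_mul, ← MonoidHom.comp_apply f inl, hinl, MonoidHom.one_apply, one_mul]
    exact MonoidHom.apply_mint _ (f.comp inr) p.right
  apply IsUnit.of_mul_eq_one_right (toAdd p.right)
  simpa [hp] using congrArg toAdd hfp.symm

end SemidirectProduct

namespace MappingTorus

variable {G H : Type*} [Group G] [Group H] {φ ψ : MulAut G}

theorem inl_apply_eq_conj (x : G) :
    (inl (φ x) : MappingTorus G φ) = inr (ofAdd 1) * inl x * (inr (ofAdd 1))⁻¹ := by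
  rw [← map_inv, ← inl_aut]
  rfl

theorem map_zpow_apply_eq_conj {f : G →* H} {s : H} (h : ∀ x, f (φ x) = s * f x * s⁻¹)
    (k : ℤ) (x : G) : f ((φ ^ k) x) = s ^ k * f x * (s ^ k)⁻¹ := by
  induction k using Int.induction_on generalizing x with
  | zero => simp
  | succ k ih => rw [zpow_add_one, MulAut.mul_apply, ih, h]; group
  | pred k ih =>
    have h_inv : f (φ⁻¹ x) = s⁻¹ * f x * s := by
      have := h (φ⁻¹ x)
      rw [MulAut.apply_inv_self] at this
      rw [this]; group
    rw [zpow_sub_one, MulAut.mul_apply, ih, h_inv]; group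

def lift (f : G →* H) (s : H) (h : ∀ x, f (φ x) = s * f x * s⁻¹) : MappingTorus G φ →* H :=
  SemidirectProduct.lift f (zpowersHom H s) fun n => MonoidHom.ext fun x => by
    simp only [MonoidHom.comp_apply, MulEquiv.coe_toMonoidHom, zpowersHom_apply,
      map_zpow_apply_eq_conj h, MulAut.conj_apply]

@[simp]
theorem lift_inl (f : G →* H) (s : H) (h : ∀ x, f (φ x) = s * f x * s⁻¹) (x : G) :
    lift f s h (inl x) = f x :=
  SemidirectProduct.lift_inl ..

@[simp]
theorem lift_inr_ofAdd_one (f : G →* H) (s : H) (h : ∀ x, f (φ x) = s * f x * s⁻¹) :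
    lift f s h (inr (ofAdd 1)) = s := by
  simp [lift]

def conjMulEquiv (g : G) (φ : MulAut G) :
    MappingTorus G (MulAut.conj g * φ) ≃* MappingTorus G φ :=
  MonoidHom.toMulEquiv
    (lift inl (inl g * inr (ofAdd 1)) fun x => by
      simp only [MulAut.mul_apply, MulAut.conj_apply, map_mul, map_inv, inl_apply_eq_conj]
      group)
    (lift inl (inl g⁻¹ * inr (ofAdd 1)) fun x => by
      have h := inl_apply_eq_conj (φ := MulAut.conj g * φ) x
      simp only [MulAut.mul_apply, MulAut.conj_apply, map_mul, map_inv] at h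
      calc inl (φ x) = (inl g)⁻¹ * (inl g * inl (φ x) * (inl g)⁻¹) * inl g := by group
        _ = _ := by rw [h, map_inv]; group)
    (hom_ext (MonoidHom.ext fun x => by simp) (MonoidHom.ext_mint (by simp)))
    (hom_ext (MonoidHom.ext fun x => by simp) (MonoidHom.ext_mint (by simp)))

def mulEquivOfMulEqConjMul (α : MulAut G) (g : G) (h : α * φ = MulAut.conj g * ψ * α) :
    MappingTorus G φ ≃* MappingTorus G ψ :=
  (SemidirectProduct.congr α (MulEquiv.refl _) (fun n => SemiconjBy.zpow_right h (toAdd n)) :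
    MappingTorus G φ ≃* MappingTorus G (MulAut.conj g * ψ)).trans (conjMulEquiv g ψ)

def invMulEquiv (φ : MulAut G) : MappingTorus G φ⁻¹ ≃* MappingTorus G φ :=
  SemidirectProduct.congr (MulEquiv.refl G) (MulEquiv.inv (Multiplicative ℤ)) fun n => by
    ext; simp

theorem exists_mul_eq_conj_mul_zpow_mul
    (hG : ∀ f : G →* Multiplicative ℤ, ¬ Function.Surjective f)
    (e : MappingTorus G φ ≃* MappingTorus G ψ) :
    ∃ (α : MulAut G) (g : G) (k : ℤ), IsUnit k ∧ α * φ = MulAut.conj g * ψ ^ k * α := by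
  have h₁ := MonoidHom.eq_one_of_forall_not_surjective hG (rightHom.comp (e.toMonoidHom.comp inl))
  have h₂ :=
    MonoidHom.eq_one_of_forall_not_surjective hG (rightHom.comp (e.symm.toMonoidHom.comp inl))
  set s := e (inr (ofAdd 1))
  refine ⟨leftMulEquiv e h₁ h₂, s.left, toAdd s.right,
    isUnit_toAdd_apply_inr_ofAdd_one (rightHom.comp e.toMonoidHom)
      (rightHom_surjective.comp e.surjective) h₁, ?_⟩
  ext x
  apply inl_injective (φ := zpowersHom (MulAut G) ψ)
  calc inl (leftMulEquiv e h₁ h₂ (φ x)) = e (inl (φ x)) := inl_leftMulEquiv ..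
    _ = s * inl (leftMulEquiv e h₁ h₂ x) * s⁻¹ := by
      rw [inl_apply_eq_conj, map_mul, map_mul, map_inv, inl_leftMulEquiv]
    _ = _ := mul_inl_mul_inv s _

end MappingTorus

/-- If `G` admits no epimorphism onto `ℤ`, then the mapping tori `G_φ` and `G_ψ` are
isomorphic if and only if the image of `φ` in `Out(G)` is conjugate to the image of `ψ`
or of `ψ⁻¹`; i.e. there are `α ∈ Aut(G)` and `g ∈ G` with `α ∘ φ = c_g ∘ ψ ∘ α` or
`α ∘ φ = c_g ∘ ψ⁻¹ ∘ α`. -/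
theorem mappingTorus_iso_iff (G : Type*) [Group G]
    (hG : ∀ f : G →* Multiplicative ℤ, ¬ Function.Surjective f)
    (φ ψ : MulAut G) :
    Nonempty (MappingTorus G φ ≃* MappingTorus G ψ) ↔
      ∃ (α : MulAut G) (g : G),
        α * φ = MulAut.conj g * ψ * α ∨ α * φ = MulAut.conj g * ψ⁻¹ * α := by
  constructor
  · rintro ⟨e⟩
    obtain ⟨α, g, k, hk, h⟩ := MappingTorus.exists_mul_eq_conj_mul_zpow_mul hG e
    refine ⟨α, g, ?_⟩
    rcases Int.isUnit_iff.mp hk with rfl | rfl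
    · exact Or.inl (by simpa using h)
    · exact Or.inr (by simpa using h)
  · rintro ⟨α, g, h | h⟩
    · exact ⟨MappingTorus.mulEquivOfMulEqConjMul α g h⟩
    · exact ⟨(MappingTorus.mulEquivOfMulEqConjMul α g h).trans (MappingTorus.invMulEquiv ψ)⟩
end

section
/- Let G be an NFQ group, let φ be an automorphism of G, let G_φ be the mapping torus, and let π : G_φ → ℤ be the canonical projection onto the ℤ-factor. If H is a subgroup of G_φ of finite index k, then H = π⁻¹(kℤ) (in particular H is normal in G_φ) and H is isomorphic as a group to the mapping torus G_{φ^k}. -/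
/-!
Since `G` has no proper subgroup of finite index, every finite-index subgroup `H` of `G_φ`
contains the fibre `G = ker π`, so `H = π⁻¹(π H)`, and `π H` is the unique subgroup `kℤ` of
index `k` in `ℤ`. The map `G_{φ^k} → G_φ`, `(g, n) ↦ (g, kn)`, is an injective homomorphism
with image `π⁻¹(kℤ)`.
-/

/-- A group is NFQ ('no finite quotients') if it has no proper subgroup of finite index. -/
def NFQ (G : Type*) [Group G] : Prop :=
  ∀ H : Subgroup G, H.index ≠ 0 → H = ⊤

open Subgroup SemidirectProduct Multiplicative

theorem NFQ.range_le_of_index_ne_zero {G K : Type*} [Group G] [Group K] (hG : NFQ G)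
    (f : G →* K) {H : Subgroup K} (hH : H.index ≠ 0) : f.range ≤ H := by
  rw [f.range_eq_map, map_le_iff_le_comap]
  refine (hG _ ?_).ge
  rw [index_comap]
  exact fun h => hH (index_eq_zero_of_relIndex_eq_zero h)

theorem NFQ.ker_rightHom_le {N G : Type*} [Group N] [Group G] {φ : G →* MulAut N}
    (hN : NFQ N) {H : Subgroup (N ⋊[φ] G)} (hH : H.index ≠ 0) :
    (rightHom : N ⋊[φ] G →* G).ker ≤ H := by
  rw [← range_inl_eq_ker_rightHom]
  exact hN.range_le_of_index_ne_zero inl hH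

theorem Subgroup.index_zpowers_ofAdd (k : ℤ) : (zpowers (ofAdd k)).index = k.natAbs := by
  rw [show zpowers (ofAdd k) = (AddSubgroup.zmultiples k).toSubgroup from rfl,
    AddSubgroup.index_toSubgroup, Int.index_zmultiples]

theorem Subgroup.eq_zpowers_ofAdd_of_index_eq {S : Subgroup (Multiplicative ℤ)} {k : ℕ}
    (hk : k ≠ 0) (hS : S.index = k) : S = zpowers (ofAdd (k : ℤ)) := by
  have hle : zpowers (ofAdd (k : ℤ)) ≤ S := by
    rw [zpowers_le, ← hS]
    simpa [← ofAdd_nsmul] using S.pow_index_mem (ofAdd (1 : ℤ))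
  have hrel := relIndex_mul_index hle
  rw [hS, index_zpowers_ofAdd, Int.natAbs_natCast] at hrel
  exact le_antisymm (relIndex_eq_one.mp (by simpa [hk] using hrel)) hle

namespace SemidirectProduct

variable {N₁ G₁ N₂ G₂ : Type*} [Group N₁] [Group G₁] [Group N₂] [Group G₂]
  {φ₁ : G₁ →* MulAut N₁} {φ₂ : G₂ →* MulAut N₂} {fn : N₁ →* N₂} {fg : G₁ →* G₂}
  {h : ∀ g : G₁, fn.comp (φ₁ g).toMonoidHom = (φ₂ (fg g)).toMonoidHom.comp fn}

theorem map_injective (hn : Function.Injective fn) (hg : Function.Injective fg) :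
    Function.Injective (map fn fg h) := fun _ _ hab =>
  SemidirectProduct.ext (hn congr(($hab).left)) (hg congr(($hab).right))

theorem range_map (hn : Function.Surjective fn) :
    (map fn fg h).range = fg.range.comap rightHom := by
  ext x
  constructor
  · rintro ⟨y, rfl⟩
    exact ⟨y.right, rfl⟩
  · rintro ⟨g, hg⟩
    obtain ⟨n, hn⟩ := hn x.left
    exact ⟨⟨n, g⟩, SemidirectProduct.ext hn hg⟩

end SemidirectProduct

namespace MappingTorus

variable {G : Type*} [Group G] (φ : MulAut G) (k : ℤ)

def zpowHom : MappingTorus G (φ ^ k) →* MappingTorus G φ :=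
  map (MonoidHom.id G) (zpowersHom _ (ofAdd k)) fun n => by
    ext g
    simp [← zpow_mul']

theorem range_zpowHom :
    (zpowHom φ k).range = (zpowers (ofAdd k)).comap rightHom :=
  range_map Function.surjective_id

variable {k}

theorem zpowHom_injective (hk : k ≠ 0) : Function.Injective (zpowHom φ k) :=
  map_injective Function.injective_id fun _ _ hmn =>
    toAdd.injective (mul_right_cancel₀ hk (congrArg toAdd hmn))

noncomputable def zpowEquiv (hk : k ≠ 0) :
    MappingTorus G (φ ^ k) ≃* (zpowers (ofAdd k)).comap (rightHom : MappingTorus G φ →* _) :=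
  (MonoidHom.ofInjective (zpowHom_injective φ hk)).trans
    (MulEquiv.subgroupCongr (range_zpowHom φ k))

end MappingTorus

/-- If `G` is NFQ and `H` is a subgroup of the mapping torus `G_φ` of finite index `k`,
then `H = π⁻¹(kℤ)` where `π : G_φ → ℤ` is the canonical projection (in particular `H`
is normal in `G_φ`), and `H ≅ G_{φ^k}`. -/
theorem finiteIndex_subgroup_of_mappingTorus (G : Type*) [Group G] (hG : NFQ G)
    (φ : MulAut G) (H : Subgroup (MappingTorus G φ)) (k : ℕ) (hk : k ≠ 0)
    (hHk : H.index = k) :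
    H = Subgroup.comap
          (SemidirectProduct.rightHom : MappingTorus G φ →* Multiplicative ℤ)
          (Subgroup.zpowers (Multiplicative.ofAdd (k : ℤ)))
      ∧ H.Normal ∧ Nonempty (H ≃* MappingTorus G (φ ^ k)) := by
  have hker := hG.ker_rightHom_le (hHk ▸ hk : H.index ≠ 0)
  have hπH : H.map rightHom = zpowers (ofAdd (k : ℤ)) :=
    eq_zpowers_ofAdd_of_index_eq hk (by rw [index_map_eq H rightHom_surjective hker, hHk])
  have hH : H = (zpowers (ofAdd (k : ℤ))).comap rightHom := by
    rw [← hπH, comap_map_eq_self hker]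
  refine ⟨hH, hH ▸ Normal.comap inferInstance _, ?_⟩
  rw [← zpow_natCast]
  exact ⟨(MulEquiv.subgroupCongr hH).trans (MappingTorus.zpowEquiv φ (by exact_mod_cast hk)).symm⟩
end

section
/- Let G be an NFQ group and φ an automorphism of G. Then the mapping torus G_φ is commensurable with G × ℤ if and only if the image of φ in Out(G) has finite order, i.e. if and only if there exist a positive integer k and an element g ∈ G such that φ^k = c_g. -/
/-- Two groups are commensurable if they have isomorphic subgroups of finite index. -/
def GroupCommensurable (G : Type*) (H : Type*) [Group G] [Group H] : Prop :=
  ∃ (K₁ : Subgroup G) (K₂ : Subgroup H), K₁.index ≠ 0 ∧ K₂.index ≠ 0 ∧ Nonempty (K₁ ≃* K₂)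

theorem exists_pos_pow_eq_of_zpow_eq {G M : Type*} [Group G] [Group M] (c : G →* M) {a : M}
    {n : ℤ} (hn : n ≠ 0) {g : G} (h : a ^ n = c g) : ∃ k : ℕ, 0 < k ∧ ∃ g : G, a ^ k = c g :=
  ⟨n.natAbs, Int.natAbs_pos.mpr hn, g ^ n.sign, by
    rw [← zpow_natCast, ← Int.sign_mul_self_eq_natAbs, mul_comm, zpow_mul, h, map_zpow]⟩

theorem Subgroup.exists_mem_apply_ne_one {G Q : Type*} [Group G] [Group Q] [Infinite Q]
    {f : G →* Q} (hf : Function.Surjective f) {K : Subgroup G} (hK : K.index ≠ 0) :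
    ∃ t ∈ K, f t ≠ 1 := by
  by_contra! h
  have hdvd := K.index_map_dvd hf
  rw [(map_eq_bot_iff K).mpr h, index_bot, Nat.card_eq_zero_of_infinite, zero_dvd_iff] at hdvd
  exact hK hdvd

theorem MonoidHom.ker_comp_subtype_le_range_codRestrict {G A Q : Type*} [Group G] [Group A]
    [Group Q] {i : G →* A} {p : A →* Q} (hpi : p.ker ≤ i.range) {K : Subgroup A}
    (hK : ∀ x, i x ∈ K) : (p.comp K.subtype).ker ≤ (i.codRestrict K hK).range := by
  intro a ha
  obtain ⟨x, hx⟩ := hpi ha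
  exact ⟨x, Subtype.ext hx⟩

theorem MulAut.eq_conj_symm_of_apply_eq {G : Type*} [Group G] {α σ : MulAut G} {g : G}
    (h : ∀ x, σ (α x) = g * σ x * g⁻¹) : α = MulAut.conj (σ.symm g) := by
  ext x
  apply σ.injective
  simp [h]

namespace NFQ

variable {G H : Type*} [Group G] [Group H]

theorem apply_mem_of_index_ne_zero (hG : NFQ G) (f : G →* H) {K : Subgroup H}
    (hK : K.index ≠ 0) (x : G) : f x ∈ K := by
  have hcomap : K.comap f = ⊤ :=
    hG _ (by rw [Subgroup.index_comap]; exact fun h => hK (K.index_eq_zero_of_relIndex_eq_zero h))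
  exact (Subgroup.eq_top_iff' _).mp hcomap x

theorem apply_eq_one_of_finite (hG : NFQ G) [Finite H] (f : G →* H) (x : G) : f x = 1 :=
  Subgroup.mem_bot.mp <|
    hG.apply_mem_of_index_ne_zero f (by rw [Subgroup.index_bot]; exact Nat.card_pos.ne') x

theorem apply_eq_one_of_int (hG : NFQ G) (f : G →* Multiplicative ℤ) (x : G) : f x = 1 := by
  set n := (f x).toAdd with hn
  have hmod : (n : ZMod (n.natAbs + 1)) = 0 :=
    congrArg Multiplicative.toAdd <| hG.apply_eq_one_of_finite
      ((AddMonoidHom.toMultiplicative (Int.castAddHom (ZMod (n.natAbs + 1)))).comp f) x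
  rw [ZMod.intCast_zmod_eq_zero_iff_dvd] at hmod
  have hn0 : n = 0 := Int.eq_zero_of_dvd_of_natAbs_lt_natAbs hmod (by omega)
  rwa [hn, toAdd_eq_zero] at hn0

theorem exists_eq_comp_of_ker_le_range (hG : NFQ G) {i : G →* H} (hi : Function.Injective i)
    {p : H →* Multiplicative ℤ} (hpi : p.ker ≤ i.range) (f : G →* H) :
    ∃ σ : G →* G, ∀ x, f x = i (σ x) :=
  have hf : ∀ x, f x ∈ i.range := fun x => hpi (hG.apply_eq_one_of_int (p.comp f) x)
  ⟨(MonoidHom.ofInjective hi).symm.toMonoidHom.comp (f.codRestrict _ hf), fun x => by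
    simp [MonoidHom.apply_ofInjective_symm]⟩

theorem exists_mulAut_intertwining {A B : Type*} [Group A] [Group B] (hG : NFQ G)
    {i₁ : G →* A} {i₂ : G →* B} (hi₁ : Function.Injective i₁) (hi₂ : Function.Injective i₂)
    {p₁ : A →* Multiplicative ℤ} {p₂ : B →* Multiplicative ℤ} (h₁ : p₁.ker ≤ i₁.range)
    (h₂ : p₂.ker ≤ i₂.range) (ψ : A ≃* B) : ∃ σ : MulAut G, ∀ x, ψ (i₁ x) = i₂ (σ x) := by
  obtain ⟨σ, hσ⟩ := hG.exists_eq_comp_of_ker_le_range hi₂ h₂ (ψ.toMonoidHom.comp i₁)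
  obtain ⟨τ, hτ⟩ := hG.exists_eq_comp_of_ker_le_range hi₁ h₁ (ψ.symm.toMonoidHom.comp i₂)
  refine ⟨{ σ with
    invFun := τ
    left_inv := fun x => hi₁ ?_
    right_inv := fun y => hi₂ ?_ }, hσ⟩
  · simpa [← hσ] using (hτ (σ x)).symm
  · simpa [← hτ, ψ.symm_apply_eq] using (hσ (τ y)).symm

end NFQ

namespace MappingTorus

open SemidirectProduct

variable {G : Type*} [Group G] {φ : MulAut G}

theorem conj_inl (t : MappingTorus G φ) (x : G) :
    t * inl x * t⁻¹ = inl ((MulAut.conj t.left * φ ^ t.right.toAdd) x) := by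
  obtain ⟨a, b, rfl⟩ : ∃ a b, t = inl a * inr b := ⟨_, _, (inl_left_mul_inr_right t).symm⟩
  rw [show inl a * inr b * inl x * (inl a * inr b)⁻¹ =
      inl a * (inr b * inl x * (inr b)⁻¹) * (inl a)⁻¹ by group, ← map_inv inr b, ← inl_aut]
  simp

theorem exists_mulAut_apply_inl (hG : NFQ G) {K₁ : Subgroup (MappingTorus G φ)}
    {K₂ : Subgroup (G × Multiplicative ℤ)} (h₁ : K₁.index ≠ 0) (h₂ : K₂.index ≠ 0)
    (ψ : K₁ ≃* K₂) : ∃ σ : MulAut G,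
      ∀ x (hx : inl x ∈ K₁), ((ψ ⟨inl x, hx⟩ : K₂) : G × Multiplicative ℤ) = (σ x, 1) := by
  have hA : ∀ x, inl x ∈ K₁ := hG.apply_mem_of_index_ne_zero inl h₁
  have hB : ∀ x, (x, 1) ∈ K₂ := hG.apply_mem_of_index_ne_zero (MonoidHom.inl _ _) h₂
  have hker : (MonoidHom.snd G (Multiplicative ℤ)).ker ≤ (MonoidHom.inl G _).range :=
    fun a ha => ⟨a.1, Prod.ext rfl ha.symm⟩
  obtain ⟨σ, hσ⟩ := hG.exists_mulAut_intertwining (i₁ := inl.codRestrict K₁ hA)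
    (i₂ := (MonoidHom.inl G _).codRestrict K₂ hB)
    (fun x y h => inl_injective (congrArg Subtype.val h))
    (fun x y h => congrArg (Prod.fst ∘ Subtype.val) h)
    (MonoidHom.ker_comp_subtype_le_range_codRestrict range_inl_eq_ker_rightHom.ge hA)
    (MonoidHom.ker_comp_subtype_le_range_codRestrict hker hB) ψ
  exact ⟨σ, fun x _ => congrArg Subtype.val (hσ x)⟩

theorem exists_zpow_eq_conj (hG : NFQ G) {K₁ : Subgroup (MappingTorus G φ)}
    {K₂ : Subgroup (G × Multiplicative ℤ)} (h₁ : K₁.index ≠ 0) (h₂ : K₂.index ≠ 0)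
    (ψ : K₁ ≃* K₂) : ∃ n : ℤ, n ≠ 0 ∧ ∃ g : G, φ ^ n = MulAut.conj g := by
  obtain ⟨σ, hσ⟩ := exists_mulAut_apply_inl hG h₁ h₂ ψ
  obtain ⟨t, ht, htr⟩ := Subgroup.exists_mem_apply_ne_one rightHom_surjective h₁
  have hA : ∀ y, inl y ∈ K₁ := hG.apply_mem_of_index_ne_zero inl h₁
  set u : G × Multiplicative ℤ := ((ψ ⟨t, ht⟩ : K₂) : G × Multiplicative ℤ)
  have hσ_conj : ∀ x, σ ((MulAut.conj t.left * φ ^ t.right.toAdd) x) = u.1 * σ x * u.1⁻¹ := by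
    intro x
    have e := congrArg (fun k => (ψ k : G × Multiplicative ℤ).1)
      (Subtype.ext (conj_inl t x) : (⟨t, ht⟩ * ⟨inl x, hA x⟩ * ⟨t, ht⟩⁻¹ : K₁) = ⟨_, hA _⟩)
    simpa only [map_mul, map_inv, Subgroup.coe_mul, Subgroup.coe_inv, Prod.fst_mul, Prod.fst_inv,
      hσ] using e.symm
  refine ⟨t.right.toAdd, by simpa using htr, t.left⁻¹ * σ.symm u.1, ?_⟩
  rw [map_mul, map_inv, ← MulAut.eq_conj_symm_of_apply_eq hσ_conj, inv_mul_cancel_left]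

theorem commute_inl_of_zpow_eq_conj {k : ℤ} {g : G} (h : φ ^ k = MulAut.conj g) (x : G) :
    Commute (inl x) (inl g⁻¹ * inr (.ofAdd k) : MappingTorus G φ) := by
  set t : MappingTorus G φ := inl g⁻¹ * inr (.ofAdd k)
  have hα : MulAut.conj t.left * φ ^ t.right.toAdd = 1 := by simp [t, h]
  have hconj := conj_inl t x
  rw [hα, MulAut.one_apply] at hconj
  exact (mul_inv_eq_iff_eq_mul.mp hconj).symm

def prodHom {k : ℤ} {g : G} (h : φ ^ k = MulAut.conj g) :
    G × Multiplicative ℤ →* MappingTorus G φ :=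
  inl.noncommCoprod (zpowersHom _ (inl g⁻¹ * inr (.ofAdd k))) fun x z =>
    (commute_inl_of_zpow_eq_conj h x).zpow_right z.toAdd

variable {k : ℤ} {g : G} (h : φ ^ k = MulAut.conj g)

theorem prodHom_apply (x : G) (z : Multiplicative ℤ) :
    prodHom h (x, z) = inl x * (inl g⁻¹ * inr (.ofAdd k)) ^ z.toAdd := rfl

theorem rightHom_prodHom (x : G) (z : Multiplicative ℤ) :
    rightHom (prodHom h (x, z)) = .ofAdd (z.toAdd * k) := by
  simp only [prodHom_apply, map_mul, map_zpow, rightHom_inl, rightHom_inr, one_mul]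
  rfl

theorem prodHom_injective (hk : k ≠ 0) : Function.Injective (prodHom h) := by
  rw [injective_iff_map_eq_one]
  rintro ⟨x, z⟩ hxz
  have hz : z = 1 := by
    have hright := congrArg rightHom hxz
    rw [rightHom_prodHom] at hright
    simpa [hk] using hright
  subst hz
  simpa [prodHom_apply] using inl_injective (φ := zpowersHom (MulAut G) φ) hxz

theorem comap_zpowers_le_range_prodHom :
    (Subgroup.zpowers (Multiplicative.ofAdd k)).comap rightHom ≤ (prodHom h).range := by
  intro w hw
  obtain ⟨m, hm⟩ := Subgroup.mem_zpowers_iff.mp hw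
  have hw' : w * ((inl g⁻¹ * inr (.ofAdd k)) ^ m)⁻¹ ∈ (inl : G →* MappingTorus G φ).range := by
    rw [range_inl_eq_ker_rightHom, MonoidHom.mem_ker, map_mul, map_inv, map_zpow, map_mul,
      rightHom_inl, rightHom_inr, one_mul, hm, mul_inv_cancel]
  obtain ⟨x, hx⟩ := hw'
  exact ⟨(x, .ofAdd m), by rw [prodHom_apply, hx]; simp⟩

theorem index_range_prodHom_ne_zero (hk : k ≠ 0) : (prodHom h).range.index ≠ 0 := by
  refine ne_zero_of_dvd_ne_zero ?_ (Subgroup.index_dvd_of_le (comap_zpowers_le_range_prodHom h))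
  rw [Subgroup.index_comap_of_surjective _ rightHom_surjective]
  exact (Int.index_zmultiples k).trans_ne (Int.natAbs_ne_zero.mpr hk)

theorem commensurable_prod_of_zpow_eq_conj (hk : k ≠ 0) (h : φ ^ k = MulAut.conj g) :
    GroupCommensurable (MappingTorus G φ) (G × Multiplicative ℤ) :=
  ⟨(prodHom h).range, ⊤, index_range_prodHom_ne_zero h hk, Subgroup.index_top.trans_ne one_ne_zero,
    ⟨(MonoidHom.ofInjective (prodHom_injective h hk)).symm.trans Subgroup.topEquiv.symm⟩⟩

end MappingTorus

/-- If `G` is NFQ, then the mapping torus `G_φ` is commensurable with `G × ℤ` if and only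
if the image of `φ` in `Out(G)` has finite order, i.e. `φ ^ k` is an inner automorphism
for some positive integer `k`. -/
theorem mappingTorus_commensurable_iff (G : Type*) [Group G] (hG : NFQ G) (φ : MulAut G) :
    GroupCommensurable (MappingTorus G φ) (G × Multiplicative ℤ) ↔
      ∃ k : ℕ, 0 < k ∧ ∃ g : G, φ ^ k = MulAut.conj g := by
  constructor
  · rintro ⟨K₁, K₂, h₁, h₂, ⟨ψ⟩⟩
    obtain ⟨n, hn, g, hg⟩ := MappingTorus.exists_zpow_eq_conj hG h₁ h₂ ψ
    exact exists_pos_pow_eq_of_zpow_eq MulAut.conj hn hg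
  · rintro ⟨k, hk, g, hg⟩
    exact MappingTorus.commensurable_prod_of_zpow_eq_conj (k := k) (by omega)
      (by rwa [zpow_natCast])
end

section
/- Let A and B be groups with B nontrivial, let G = A * B be their free product, and let a ∈ A. Then the automorphism τ_a of G is inner (i.e. there exists g ∈ G with τ_a = c_g) if and only if a belongs to the center of A. -/
/-!
If `τ = c_g`, then `g` commutes with `inr b` for some `b ≠ 1`. In a free product the centraliser
of a nontrivial element of a factor lies in that factor: stripping the letters of that factor from
both ends of the reduced word of `g` leaves a reduced word `w` with `b₁ w = w b₂`, and the two sides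
are reduced words beginning in different factors. Hence `g = inr c`, and projecting
`τ (inl x) = g (inl x) g⁻¹` to `A` gives `a⁻¹ x a = x`. Conversely, if `a` is central then `τ` fixes
both factors pointwise, so `τ = c_1`.
-/

open Monoid

namespace Monoid.CoprodI

variable {ι : Type*} {G : ι → Type*} [∀ i, Group (G i)]

namespace NeWord

theorem toList_eq_of_prod_eq {i j k l : ι} {u : NeWord G i j} {v : NeWord G k l}
    (h : u.prod = v.prod) : u.toList = v.toList := by
  classical
  exact congrArg Word.toList (Word.equiv.symm.injective h)

theorem fstIdx_eq_of_prod_eq {i j k l : ι} {u : NeWord G i j} {v : NeWord G k l}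
    (h : u.prod = v.prod) : i = k := by
  have hu := u.toList_head?
  rw [toList_eq_of_prod_eq h, v.toList_head?] at hu
  exact (congrArg Sigma.fst (Option.some.inj hu)).symm

theorem prod_mem_range_or_eq_of_mul (i : ι) {j k : ι} (u : NeWord G j k) :
    u.prod ∈ (of : G i →* CoprodI G).range ∨
      ∃ (h : G i) (j' : ι) (v : NeWord G j' k), j' ≠ i ∧ u.prod = of h * v.prod := by
  induction u with
  | @singleton j x hx =>
    by_cases hj : j = i
    · subst hj
      exact .inl ⟨x, by simp⟩
    · exact .inr ⟨1, j, singleton x hx, hj, by simp⟩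
  | append u₁ hne u₂ ih₁ ih₂ =>
    rcases ih₁ with ⟨c, hc⟩ | ⟨h, j', v, hj', hv⟩
    · rcases ih₂ with ⟨c₂, hc₂⟩ | ⟨h₂, j₂, v₂, hj₂, hv₂⟩
      · exact .inl ⟨c * c₂, by simp [append_prod, hc, hc₂]⟩
      · exact .inr ⟨c * h₂, j₂, v₂, hj₂, by simp [append_prod, ← hc, hv₂, mul_assoc]⟩
    · exact .inr ⟨h, j', v.append hne u₂, hj', by simp [append_prod, hv, mul_assoc]⟩

theorem prod_mem_range_or_eq_mul_of (i : ι) {j k : ι} (u : NeWord G j k) :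
    u.prod ∈ (of : G i →* CoprodI G).range ∨
      ∃ (h : G i) (k' : ι) (v : NeWord G j k'), k' ≠ i ∧ u.prod = v.prod * of h := by
  rcases prod_mem_range_or_eq_of_mul i u.inv with hu | ⟨h, k', v, hk', hv⟩
  · rw [inv_prod] at hu
    exact .inl (by simpa using inv_mem hu)
  · refine .inr ⟨h⁻¹, k', v.inv, hk', ?_⟩
    rw [inv_prod, ← inv_inv u.prod, ← inv_prod, hv]
    simp

end NeWord

theorem mem_range_or_eq_of_mul_prod_mul (i : ι) (g : CoprodI G) :
    g ∈ (of : G i →* CoprodI G).range ∨ ∃ (h h' : G i) (j k : ι) (w : NeWord G j k),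
      j ≠ i ∧ k ≠ i ∧ g = of h * w.prod * of h' := by
  classical
  by_cases hg : g = 1
  · exact .inl (hg ▸ one_mem _)
  have hW : Word.equiv g ≠ Word.empty := by rwa [Ne, ← Equiv.eq_symm_apply]
  obtain ⟨j, k, u, huW⟩ := NeWord.of_word _ hW
  have hug : u.prod = g := by rw [NeWord.prod, huW]; exact Word.equiv.symm_apply_apply g
  rcases NeWord.prod_mem_range_or_eq_of_mul i u with hu | ⟨h, j', v, hj', hv⟩
  · exact .inl (hug ▸ hu)
  rcases NeWord.prod_mem_range_or_eq_mul_of i v with ⟨c, hc⟩ | ⟨h', k', w, hk', hw⟩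
  · exact .inl ⟨h * c, by rw [← hug, hv, ← hc, map_mul]⟩
  · exact .inr ⟨h, h', j', k', w, hj', hk', by rw [← hug, hv, hw, mul_assoc]⟩

theorem mem_range_of_commute_of {i : ι} {b : G i} (hb : b ≠ 1) {g : CoprodI G}
    (hg : Commute (of b) g) : g ∈ (of : G i →* CoprodI G).range := by
  rcases mem_range_or_eq_of_mul_prod_mul i g with hg' | ⟨h, h', j, k, w, hj, hk, rfl⟩
  · exact hg'
  have hb₁ : h⁻¹ * b * h⁻¹⁻¹ ≠ 1 := conj_eq_one_iff.not.mpr hb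
  have hb₂ : h' * b * h'⁻¹ ≠ 1 := conj_eq_one_iff.not.mpr hb
  have hcomm : ((NeWord.singleton _ hb₁).append (Ne.symm hj) w).prod =
      (w.append hk (NeWord.singleton _ hb₂)).prod := by
    simp only [NeWord.append_prod, NeWord.prod_singleton, map_mul, map_inv, inv_inv]
    calc (of h)⁻¹ * of b * of h * w.prod
        = (of h)⁻¹ * (of b * (of h * w.prod * of h')) * (of h')⁻¹ := by group
      _ = (of h)⁻¹ * ((of h * w.prod * of h') * of b) * (of h')⁻¹ := by rw [hg.eq]
      _ = w.prod * (of h' * of b * (of h')⁻¹) := by group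
  exact absurd (NeWord.fstIdx_eq_of_prod_eq hcomm).symm hj

end Monoid.CoprodI

namespace Monoid.Coprod

universe u v

variable (A : Type u) (B : Type v) [Group A] [Group B]

-- `CoprodI` needs all factors in one universe.
def summand : Bool → Type (max u v)
  | true => ULift.{v} A
  | false => ULift.{u} B

instance : ∀ b, Group (summand A B b)
  | true => inferInstanceAs (Group (ULift A))
  | false => inferInstanceAs (Group (ULift B))

def toCoprodI : Coprod A B →* CoprodI (summand A B) :=
  lift ((CoprodI.of (i := true)).comp MulEquiv.ulift.symm.toMonoidHom)
    ((CoprodI.of (i := false)).comp MulEquiv.ulift.symm.toMonoidHom)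

def ofCoprodI : CoprodI (summand A B) →* Coprod A B :=
  CoprodI.lift fun
    | true => inl.comp MulEquiv.ulift.toMonoidHom
    | false => inr.comp MulEquiv.ulift.toMonoidHom

theorem ofCoprodI_toCoprodI (g : Coprod A B) : ofCoprodI A B (toCoprodI A B g) = g := by
  induction g using Coprod.induction_on with
  | inl x => rfl
  | inr y => rfl
  | mul x y hx hy => rw [map_mul, map_mul, hx, hy]

variable {A B}

theorem mem_range_inr_of_commute {b : B} (hb : b ≠ 1) {g : Coprod A B}
    (hg : Commute (inr b) g) : g ∈ (inr : B →* Coprod A B).range := by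
  have hb' : (ULift.up b : summand A B false) ≠ 1 := fun h ↦ hb (congrArg ULift.down h)
  obtain ⟨c, hc⟩ := CoprodI.mem_range_of_commute_of hb' (hg.map (toCoprodI A B))
  exact ⟨c.down, by rw [← ofCoprodI_toCoprodI A B g, ← hc]; rfl⟩

end Monoid.Coprod

/-- Let `G = A * B` be a free product with `B` nontrivial, `a ∈ A`, and let `τ` be the
automorphism of `G` with `τ(x) = a⁻¹ x a` for `x ∈ A` and `τ(y) = y` for `y ∈ B`.
Then `τ` is inner if and only if `a` lies in the center of `A`. -/
theorem tau_inner_iff_central (A B : Type*) [Group A] [Group B] [Nontrivial B] (a : A)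
    (τ : MulAut (Coprod A B))
    (hτl : ∀ x : A, τ (Coprod.inl x) = Coprod.inl (a⁻¹ * x * a))
    (hτr : ∀ y : B, τ (Coprod.inr y) = Coprod.inr y) :
    (∃ g : Coprod A B, τ = MulAut.conj g) ↔ a ∈ Subgroup.center A := by
  constructor
  · rintro ⟨g, rfl⟩
    obtain ⟨b, hb⟩ := exists_ne (1 : B)
    obtain ⟨c, rfl⟩ := Coprod.mem_range_inr_of_commute hb
      (mul_inv_eq_iff_eq_mul.mp (hτr b)).symm
    refine Subgroup.mem_center_iff.mpr fun x ↦ ?_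
    have hx := congrArg Coprod.fst (hτl x)
    simp only [MulAut.conj_apply, map_mul, map_inv, Coprod.fst_apply_inl, Coprod.fst_apply_inr,
      one_mul, inv_one, mul_one, mul_assoc, eq_inv_mul_iff_mul_eq] at hx
    exact hx.symm
  · intro ha
    refine ⟨1, ?_⟩
    have : (τ : Coprod A B →* Coprod A B) = MonoidHom.id _ :=
      Coprod.hom_ext (MonoidHom.ext fun x ↦ by simp [hτl, Subgroup.mem_center_iff.mp ha x, mul_assoc])
        (MonoidHom.ext hτr)
    ext z
    simpa using DFunLike.congr_fun this z
end

section
/- If A and B are nontrivial groups, then every finite normal subgroup of the free product A * B is trivial. -/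
/-!
A nontrivial element of a free product is a reduced word `w` from factor `k` to factor `l`.
If `k ≠ l`, all powers of `w` are again reduced, hence nontrivial, so `w` has infinite order.
If `k = l`, the commutator with a nontrivial letter `c` from another factor is the reduced word
`w c w⁻¹ c⁻¹`, which starts and ends in different factors and lies in every normal subgroup
containing `w`. So a nontrivial normal subgroup has an element of infinite order.
-/

open Monoid CoprodI
open scoped commutatorElement

universe u v

namespace Monoid.CoprodI

variable {ι : Type*}

section Monoid

variable {M : ι → Type*} [∀ i, Monoid (M i)]

theorem NeWord.prod_ne_one {i j : ι} (w : NeWord M i j) : w.prod ≠ 1 := by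
  classical
  intro h
  have : w.toWord = Word.empty :=
    Word.equiv.symm.injective (h.trans Word.prod_empty.symm)
  exact w.toList_ne_nil (congrArg Word.toList this)

theorem exists_neWord_prod_eq {x : CoprodI M} (hx : x ≠ 1) :
    ∃ (i j : ι) (w : NeWord M i j), w.prod = x := by
  classical
  have hword : Word.equiv x ≠ Word.empty := fun h =>
    hx (by rw [← Word.equiv.symm_apply_apply x, h]; exact Word.prod_empty)
  obtain ⟨i, j, w, hw⟩ := NeWord.of_word _ hword
  exact ⟨i, j, w, by rw [NeWord.prod, hw]; exact Word.equiv.symm_apply_apply x⟩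

/-- The reduced word `w w ⋯ w` with `n + 1` copies of `w`. -/
def NeWord.powSucc {i j : ι} (w : NeWord M i j) (hij : i ≠ j) : ℕ → NeWord M i j
  | 0 => w
  | n + 1 => (w.powSucc hij n).append hij.symm w

theorem NeWord.prod_powSucc {i j : ι} (w : NeWord M i j) (hij : i ≠ j) (n : ℕ) :
    (w.powSucc hij n).prod = w.prod ^ (n + 1) := by
  induction n with
  | zero => simp [powSucc]
  | succ n ih => rw [powSucc, NeWord.append_prod, ih, ← pow_succ]

theorem NeWord.not_isOfFinOrder_prod {i j : ι} (w : NeWord M i j) (hij : i ≠ j) :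
    ¬IsOfFinOrder w.prod := by
  rw [isOfFinOrder_iff_pow_eq_one]
  rintro ⟨n, hn, hpow⟩
  obtain ⟨m, rfl⟩ := Nat.exists_eq_add_of_lt hn
  apply (w.powSucc hij m).prod_ne_one
  simpa [NeWord.prod_powSucc] using hpow

end Monoid

variable {G : ι → Type*} [∀ i, Group (G i)]

theorem NeWord.exists_prod_eq_commutator {k t : ι} (w : NeWord G k k) (hkt : k ≠ t)
    {c : G t} (hc : c ≠ 1) : ∃ w' : NeWord G k t, w'.prod = ⁅w.prod, of c⁆ :=
  ⟨((w.append hkt (singleton c hc)).append hkt.symm w.inv).append hkt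
      (singleton c⁻¹ (inv_ne_one.mpr hc)),
    by simp [NeWord.append_prod, NeWord.inv_prod, commutatorElement_def, mul_assoc]⟩

theorem exists_not_isOfFinOrder_mem_of_normal {i j : ι} (hij : i ≠ j) [Nontrivial (G i)]
    [Nontrivial (G j)] {N : Subgroup (CoprodI G)} (hN : N.Normal) (hN_ne : N ≠ ⊥) :
    ∃ x ∈ N, ¬IsOfFinOrder x := by
  obtain ⟨x, hx, hx_ne⟩ := N.bot_or_exists_ne_one.resolve_left hN_ne
  obtain ⟨k, l, w, rfl⟩ := exists_neWord_prod_eq hx_ne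
  by_cases hkl : k = l
  · subst hkl
    obtain ⟨t, hkt, c, hc⟩ : ∃ t, k ≠ t ∧ ∃ c : G t, c ≠ 1 := by
      by_cases hki : k = i
      · exact ⟨j, hki ▸ hij, exists_ne 1⟩
      · exact ⟨i, hki, exists_ne 1⟩
    obtain ⟨w', hw'⟩ := w.exists_prod_eq_commutator hkt hc
    refine ⟨w'.prod, ?_, w'.not_isOfFinOrder_prod hkt⟩
    rw [hw']
    exact Subgroup.commutator_le_left N ⊤
      (Subgroup.commutator_mem_commutator hx (Subgroup.mem_top _))
  · exact ⟨w.prod, hx, w.not_isOfFinOrder_prod hkl⟩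

theorem eq_bot_of_normal_of_finite {i j : ι} (hij : i ≠ j) [Nontrivial (G i)]
    [Nontrivial (G j)] {N : Subgroup (CoprodI G)} (hN : N.Normal)
    (hfin : (N : Set (CoprodI G)).Finite) : N = ⊥ := by
  by_contra hN_ne
  obtain ⟨x, hx, hx_inf⟩ := exists_not_isOfFinOrder_mem_of_normal hij hN hN_ne
  have : Finite N := hfin.to_subtype
  exact hx_inf (N.subtype.isOfFinOrder (isOfFinOrder_of_finite (⟨x, hx⟩ : N)))

end Monoid.CoprodI

namespace Monoid.Coprod

/-- `A ∗ B` as the indexed free product of the family `true ↦ A`, `false ↦ B`, lifted to a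
common universe. -/
def factor (A : Type u) (B : Type v) : Bool → Type max u v
  | true => ULift.{v} A
  | false => ULift.{u} B

variable (A : Type u) (B : Type v) [Group A] [Group B]

instance : ∀ b, Group (factor A B b)
  | true => inferInstanceAs (Group (ULift A))
  | false => inferInstanceAs (Group (ULift B))

def mulEquivCoprodI : A ∗ B ≃* CoprodI (factor A B) :=
  MonoidHom.toMulEquiv
    (lift ((CoprodI.of (i := true)).comp MulEquiv.ulift.symm.toMonoidHom)
      ((CoprodI.of (i := false)).comp MulEquiv.ulift.symm.toMonoidHom))
    (CoprodI.lift fun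
      | true => inl.comp MulEquiv.ulift.toMonoidHom
      | false => inr.comp MulEquiv.ulift.toMonoidHom)
    (hom_ext (by ext; rfl) (by ext; rfl))
    (CoprodI.ext_hom _ _ fun | true => by ext; rfl | false => by ext; rfl)

end Monoid.Coprod

/-- If `A` and `B` are nontrivial groups, then every finite normal subgroup of the free
product `A * B` is trivial. -/
theorem finite_normal_subgroup_of_coprod (A B : Type*) [Group A] [Group B]
    [Nontrivial A] [Nontrivial B] (N : Subgroup (Coprod A B)) (hN : N.Normal)
    (hfin : (N : Set (Coprod A B)).Finite) :
    N = ⊥ := by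
  let e := Coprod.mulEquivCoprodI A B
  have : Nontrivial (Coprod.factor A B true) := inferInstanceAs (Nontrivial (ULift A))
  have : Nontrivial (Coprod.factor A B false) := inferInstanceAs (Nontrivial (ULift B))
  have hmap : N.map e.toMonoidHom = ⊥ :=
    CoprodI.eq_bot_of_normal_of_finite (i := true) (j := false) (by decide)
      (hN.map _ e.surjective) (by rw [Subgroup.coe_map]; exact hfin.image _)
  exact (N.map_eq_bot_iff_of_injective e.injective).mp hmap
end
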